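/- arXiv:1509.08012 — 5 statements merged into one kernel-verified Lean document; each statement's English description precedes it below -/
import Mathlib

section
/- Let N be a natural number, a < b real numbers, and u : ℝ → ℝ a smooth (infinitely differentiable) function. Let p be the degree-(2N+1) two-point Hermite interpolant of u on [a,b]. Then for every real polynomial q of degree at most 2N+1, the integral over [a,b] of the product of the (N+1)-st derivative of (u − p) with the (N+1)-st derivative of q equals zero: ∫_a^b (u − p)^{(N+1)}(x) · q^{(N+1)}(x) dx = 0. -/
open intervalIntegral Polynomial

lemma polyContDiff (p : Polynomial ℝ) : ContDiff ℝ (⊤ : ℕ∞) (fun x : ℝ => p.eval x) := by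
  induction p using Polynomial.induction_on' with
  | add f g hf hg => simpa [Polynomial.eval_add] using hf.add hg
  | monomial n c =>
      simpa [Polynomial.eval_monomial] using (contDiff_const.mul (contDiff_id.pow n) :
        ContDiff ℝ (⊤ : ℕ∞) fun x : ℝ => c * x ^ n)

lemma polyIter (n : ℕ) (p : Polynomial ℝ) :
    iteratedDeriv n (fun x : ℝ => p.eval x) = fun x => (derivative^[n] p).eval x := by
  induction n generalizing p with
  | zero => simp
  | succ n ih =>
      rw [iteratedDeriv_succ']
      have : (deriv fun x : ℝ => p.eval x) = fun x : ℝ => (derivative p).eval x := by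
        funext x; exact p.deriv
      rw [this, ih, Function.iterate_succ_apply]

lemma subIter (j : ℕ) (f : ℝ → ℝ) (hf : ContDiff ℝ (⊤ : ℕ∞) f) (r : Polynomial ℝ) :
    iteratedDeriv j (fun y => f y - r.eval y) =
      fun x => iteratedDeriv j f x - (derivative^[j] r).eval x := by
  induction j generalizing f r with
  | zero => simp
  | succ j ih =>
      rw [iteratedDeriv_succ']
      have hd : (deriv fun y => f y - r.eval y) =
          fun y => deriv f y - (derivative r).eval y := by
        funext x
        exact (((hf.differentiable (by simp) x).hasDerivAt).sub (r.hasDerivAt x)).deriv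
      rw [hd, ih (deriv f) ((contDiff_infty_iff_deriv.mp hf).2) (derivative r),
        Function.iterate_succ_apply, ← iteratedDeriv_succ']

/-- **Orthogonality of the Hermite interpolation error in the `H^{N+1}` seminorm.**
Let `a < b`, `u : ℝ → ℝ` be smooth, and `p` be the degree-`2N+1` two-point Hermite
interpolant of `u` on `[a,b]` (i.e. `p` has degree `≤ 2N+1` and matches `u` and its
first `N` derivatives at `a` and `b`).  Then for every polynomial `q` of degree at
most `2N+1`, `∫_a^b (u - p)⁽ᴺ⁺¹⁾(x) · q⁽ᴺ⁺¹⁾(x) dx = 0`. -/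
theorem hermite_interpolation_error_orthogonal
    (N : ℕ) (a b : ℝ) (hab : a < b) (u : ℝ → ℝ) (hu : ContDiff ℝ (⊤ : ℕ∞) u)
    (p : Polynomial ℝ) (hpdeg : p.degree ≤ (2 * N + 1 : ℕ))
    (hinterp : ∀ j ≤ N,
      iteratedDeriv j (fun y => p.eval y) a = iteratedDeriv j u a ∧
      iteratedDeriv j (fun y => p.eval y) b = iteratedDeriv j u b) :
    ∀ q : Polynomial ℝ, q.degree ≤ (2 * N + 1 : ℕ) →
      ∫ x in a..b,
        iteratedDeriv (N + 1) (fun y => u y - p.eval y) x *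
          iteratedDeriv (N + 1) (fun y => q.eval y) x = 0 := by
  intro q hq
  set e : ℝ → ℝ := fun y => u y - p.eval y with he_def
  have he : ContDiff ℝ (⊤ : ℕ∞) e := hu.sub (polyContDiff p)
  -- boundary vanishing
  have hvan : ∀ j ≤ N, iteratedDeriv j e a = 0 ∧ iteratedDeriv j e b = 0 := by
    intro j hj
    have h1 := subIter j u (hu.of_le (by simp)) p
    have h2 := polyIter j p
    have h3 := hinterp j hj
    constructor
    · have := congrFun h1 a
      rw [this, ← congrFun h2 a, h3.1]; ring
    · have := congrFun h1 b
      rw [this, ← congrFun h2 b, h3.2]; ring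
  -- continuity helpers
  have hEcont : ∀ j : ℕ, Continuous (iteratedDeriv j e) := fun j =>
    he.continuous_iteratedDeriv j (by exact_mod_cast le_top)
  have hEderiv : ∀ (j : ℕ) (x : ℝ),
      HasDerivAt (iteratedDeriv j e) (iteratedDeriv (j + 1) e x) x := by
    intro j x
    have hd := (he.differentiable_iteratedDeriv j (by exact_mod_cast ENat.coe_lt_top j)) x
    rw [iteratedDeriv_succ]
    exact hd.hasDerivAt
  -- main induction
  have key : ∀ k : ℕ, k ≤ N + 1 →
      (∫ x in a..b, iteratedDeriv (N + 1) e x * (derivative^[N + 1] q).eval x) =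
        (-1 : ℝ) ^ k *
          ∫ x in a..b, iteratedDeriv (N + 1 - k) e x * (derivative^[N + 1 + k] q).eval x := by
    intro k
    induction k with
    | zero => intro _; simp
    | succ k ih =>
        intro hk
        have hkN : k ≤ N := by omega
        rw [ih (by omega)]
        have hNk : N + 1 - k = (N - k) + 1 := by omega
        have hibp :
            (∫ x in a..b, (derivative^[N + 1 + k] q).eval x * iteratedDeriv ((N - k) + 1) e x) =
            (derivative^[N + 1 + k] q).eval b * iteratedDeriv (N - k) e b -
              (derivative^[N + 1 + k] q).eval a * iteratedDeriv (N - k) e a -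
            ∫ x in a..b, (derivative^[N + 2 + k] q).eval x * iteratedDeriv (N - k) e x := by
          apply integral_mul_deriv_eq_deriv_mul
          · intro x _
            have := (derivative^[N + 1 + k] q).hasDerivAt x
            have h2 : derivative (derivative^[N + 1 + k] q) = derivative^[N + 2 + k] q := by
              rw [← Function.iterate_succ_apply' derivative]
              congr 1; omega
            rwa [h2] at this
          · intro x _; exact hEderiv (N - k) x
          · exact ((derivative^[N + 2 + k] q).continuous_aeval.intervalIntegrable a b)
          · exact ((hEcont ((N - k) + 1)).intervalIntegrable a b)
        have hb0 := (hvan (N - k) (by omega)).2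
        have ha0 := (hvan (N - k) (by omega)).1
        rw [hb0, ha0] at hibp
        simp only [mul_zero, zero_sub, sub_zero] at hibp
        have hcomm1 :
            (∫ x in a..b, iteratedDeriv (N + 1 - k) e x * (derivative^[N + 1 + k] q).eval x) =
            ∫ x in a..b, (derivative^[N + 1 + k] q).eval x * iteratedDeriv ((N - k) + 1) e x := by
          rw [hNk]; congr 1; funext x; ring
        have hcomm2 :
            (∫ x in a..b, (derivative^[N + 2 + k] q).eval x * iteratedDeriv (N - k) e x) =
            ∫ x in a..b, iteratedDeriv (N + 1 - (k + 1)) e x *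
              (derivative^[N + 1 + (k + 1)] q).eval x := by
          have h1 : N + 1 - (k + 1) = N - k := by omega
          have h2 : N + 1 + (k + 1) = N + 2 + k := by omega
          rw [h1, h2]; congr 1; funext x; ring
        rw [hcomm1, hibp, hcomm2]
        ring
  -- conclude
  have hq2 : derivative^[N + 1 + (N + 1)] q = 0 := by
    apply Polynomial.iterate_derivative_eq_zero
    have := Polynomial.natDegree_le_iff_degree_le.mpr hq
    omega
  have hfinal := key (N + 1) le_rfl
  rw [hq2] at hfinal
  simp only [Polynomial.eval_zero, mul_zero, intervalIntegral.integral_zero, mul_zero] at hfinal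
  simp only [polyIter (N + 1) q]
  exact hfinal
end

section
/- Let N be a natural number, a < b real numbers, and u : ℝ → ℝ a smooth (infinitely differentiable) function. Let p be the degree-(2N+1) two-point Hermite interpolant of u on [a,b]. Then the squared H^{N+1} seminorms satisfy the Pythagorean identity ∫_a^b (u^{(N+1)}(x))² dx = ∫_a^b ((u − p)^{(N+1)}(x))² dx + ∫_a^b (p^{(N+1)}(x))² dx. -/
open intervalIntegral Polynomial

lemma contDiff_polyeval (p : Polynomial ℝ) : ContDiff ℝ (⊤ : ℕ∞) fun y : ℝ => p.eval y := by
  induction p using Polynomial.induction_on' with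
  | add p q hp hq => simpa [Polynomial.eval_add] using hp.add hq
  | monomial n c =>
      simpa [Polynomial.eval_monomial] using (contDiff_const (c := c)).mul (contDiff_id.pow n)

lemma iteratedDeriv_sub' {f g : ℝ → ℝ} (n : ℕ) (hf : ContDiff ℝ (⊤ : ℕ∞) f) (hg : ContDiff ℝ (⊤ : ℕ∞) g)
    (x : ℝ) : iteratedDeriv n (fun y => f y - g y) x = iteratedDeriv n f x - iteratedDeriv n g x := by
  have := iteratedDerivWithin_sub (Set.mem_univ x) uniqueDiffOn_univ
    (f := f) (g := g) (n := n) (hf.of_le (by exact_mod_cast le_top)).contDiffWithinAt (hg.of_le (by exact_mod_cast le_top)).contDiffWithinAt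
  simp only [iteratedDerivWithin_univ] at this
  exact this

lemma poly_iteratedDeriv (p : Polynomial ℝ) (k : ℕ) :
    iteratedDeriv k (fun y : ℝ => p.eval y) = fun y => (Polynomial.derivative^[k] p).eval y := by
  induction k generalizing p with
  | zero => simp
  | succ k ih =>
      rw [iteratedDeriv_succ']
      have : (deriv fun y : ℝ => p.eval y)
          = fun y : ℝ => (Polynomial.derivative p).eval y := by
        funext y; exact Polynomial.deriv p
      rw [this, ih]
      funext y
      simp [Function.iterate_succ_apply]

/-- **Pythagorean identity for Hermite interpolation in the `H^{N+1}` seminorm.**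
Let `a < b`, `u : ℝ → ℝ` be smooth, and `p` be the degree-`2N+1` two-point Hermite
interpolant of `u` on `[a,b]`.  Then
`∫_a^b (u⁽ᴺ⁺¹⁾)² = ∫_a^b ((u-p)⁽ᴺ⁺¹⁾)² + ∫_a^b (p⁽ᴺ⁺¹⁾)²`. -/
theorem hermite_interpolation_pythagorean
    (N : ℕ) (a b : ℝ) (hab : a < b) (u : ℝ → ℝ) (hu : ContDiff ℝ (⊤ : ℕ∞) u)
    (p : Polynomial ℝ) (hpdeg : p.degree ≤ (2 * N + 1 : ℕ))
    (hinterp : ∀ j ≤ N,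
      iteratedDeriv j (fun y => p.eval y) a = iteratedDeriv j u a ∧
      iteratedDeriv j (fun y => p.eval y) b = iteratedDeriv j u b) :
    (∫ x in a..b, (iteratedDeriv (N + 1) u x) ^ 2) =
      (∫ x in a..b, (iteratedDeriv (N + 1) (fun y => u y - p.eval y) x) ^ 2) +
        ∫ x in a..b, (iteratedDeriv (N + 1) (fun y => p.eval y) x) ^ 2 := by
  have hP : ContDiff ℝ (⊤ : ℕ∞) fun y : ℝ => p.eval y := contDiff_polyeval p
  have he : ContDiff ℝ (⊤ : ℕ∞) fun y : ℝ => u y - p.eval y := hu.sub hP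
  set e : ℝ → ℝ := fun y => u y - p.eval y with hedef
  -- boundary values of derivatives of e vanish
  have hbdry : ∀ j ≤ N, iteratedDeriv j e a = 0 ∧ iteratedDeriv j e b = 0 := by
    intro j hj
    constructor
    · rw [hedef, iteratedDeriv_sub' j hu hP, (hinterp j hj).1, sub_self]
    · rw [hedef, iteratedDeriv_sub' j hu hP, (hinterp j hj).2, sub_self]
  -- continuity / integrability helpers
  have hEc : ∀ m : ℕ, Continuous (iteratedDeriv m e) := fun m =>
    he.continuous_iteratedDeriv m (by exact_mod_cast le_top)
  have hEd : ∀ m : ℕ, ∀ x : ℝ, HasDerivAt (iteratedDeriv m e) (iteratedDeriv (m + 1) e x) x := by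
    intro m x
    have hd : DifferentiableAt ℝ (iteratedDeriv m e) x := by
      exact (he.differentiable_iteratedDeriv m (by
        exact_mod_cast ENat.coe_lt_top m)).differentiableAt
    simpa [iteratedDeriv_succ] using hd.hasDerivAt
  -- the cross term vanishes
  have key : ∀ k ≤ N + 1,
      (∫ x in a..b, iteratedDeriv (N + 1) e x * (Polynomial.derivative^[N + 1] p).eval x)
        = (-1 : ℝ) ^ k *
          ∫ x in a..b, iteratedDeriv (N + 1 - k) e x *
            (Polynomial.derivative^[N + 1 + k] p).eval x := by
    intro k hk
    induction k with
    | zero => simp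
    | succ k ih =>
      have hkN : k ≤ N := Nat.lt_succ_iff.mp hk
      have ih' := ih (le_trans (Nat.le_succ k) hk)
      set q : Polynomial ℝ := Polynomial.derivative^[N + 1 + k] p with hq
      have hm : N + 1 - k = (N - k) + 1 := by omega
      have hibp :
          (∫ x in a..b, q.eval x * iteratedDeriv ((N - k) + 1) e x)
            = q.eval b * iteratedDeriv (N - k) e b - q.eval a * iteratedDeriv (N - k) e a -
              ∫ x in a..b, (Polynomial.derivative q).eval x * iteratedDeriv (N - k) e x := by
        apply integral_mul_deriv_eq_deriv_mul
        · intro x _; exact q.hasDerivAt x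
        · intro x _; exact hEd (N - k) x
        · exact ((Polynomial.derivative q).continuous_aeval.intervalIntegrable a b)
        · exact ((hEc ((N - k) + 1)).intervalIntegrable a b)
      rw [(hbdry (N - k) (by omega)).1, (hbdry (N - k) (by omega)).2] at hibp
      simp only [mul_zero, sub_zero, zero_sub] at hibp
      rw [ih', hm]
      have hcomm : (∫ x in a..b, iteratedDeriv ((N - k) + 1) e x * q.eval x)
          = ∫ x in a..b, q.eval x * iteratedDeriv ((N - k) + 1) e x := by
        apply intervalIntegral.integral_congr; intro x _; ring
      have hcomm2 : (∫ x in a..b, (Polynomial.derivative q).eval x * iteratedDeriv (N - k) e x)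
          = ∫ x in a..b, iteratedDeriv (N - k) e x * (Polynomial.derivative q).eval x := by
        apply intervalIntegral.integral_congr; intro x _; ring
      have hqd : Polynomial.derivative q = Polynomial.derivative^[N + 1 + (k + 1)] p := by
        rw [hq, show N + 1 + (k + 1) = (N + 1 + k) + 1 from by omega,
          Function.iterate_succ_apply']
      have hsub : N + 1 - (k + 1) = N - k := by omega
      rw [hcomm, hibp, hcomm2, hqd, hsub]
      ring
  have hzero :
      (∫ x in a..b, iteratedDeriv (N + 1) e x * (Polynomial.derivative^[N + 1] p).eval x) = 0 := by
    have h2 := key (N + 1) le_rfl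
    have hdeg0 : Polynomial.derivative^[N + 1 + (N + 1)] p = 0 := by
      apply Polynomial.iterate_derivative_eq_zero
      have : p.natDegree ≤ 2 * N + 1 := Polynomial.natDegree_le_iff_degree_le.mpr hpdeg
      omega
    rw [h2, hdeg0]
    simp
  -- pointwise decomposition
  have hPd : iteratedDeriv (N + 1) (fun y : ℝ => p.eval y)
      = fun x => (Polynomial.derivative^[N + 1] p).eval x := poly_iteratedDeriv p (N + 1)
  have hdecomp : ∀ x : ℝ, iteratedDeriv (N + 1) u x
      = iteratedDeriv (N + 1) e x + (Polynomial.derivative^[N + 1] p).eval x := by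
    intro x
    simp only [hedef, iteratedDeriv_sub' (N + 1) hu hP, hPd]
    ring
  set E := iteratedDeriv (N + 1) e with hE
  set Q : ℝ → ℝ := fun x => (Polynomial.derivative^[N + 1] p).eval x with hQ
  have hsplit : (∫ x in a..b, (iteratedDeriv (N + 1) u x) ^ 2)
      = ∫ x in a..b, ((E x) ^ 2 + ((2 * (E x * Q x)) + (Q x) ^ 2)) := by
    apply intervalIntegral.integral_congr
    intro x _
    simp only [hdecomp]
    ring
  have hiE : IntervalIntegrable (fun x => (E x) ^ 2) MeasureTheory.volume a b :=
    ((hEc (N + 1)).pow 2).intervalIntegrable a b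
  have hiQ : IntervalIntegrable (fun x => (Q x) ^ 2) MeasureTheory.volume a b :=
    (((Polynomial.derivative^[N + 1] p).continuous_aeval).pow 2).intervalIntegrable a b
  have hiC : IntervalIntegrable (fun x => 2 * (E x * Q x)) MeasureTheory.volume a b :=
    (continuous_const.mul ((hEc (N + 1)).mul
      (Polynomial.derivative^[N + 1] p).continuous_aeval)).intervalIntegrable a b
  rw [hsplit, intervalIntegral.integral_add hiE (hiC.add hiQ),
    intervalIntegral.integral_add hiC hiQ]
  have hcross : (∫ x in a..b, 2 * (E x * Q x)) = 0 := by
    rw [intervalIntegral.integral_const_mul, hzero, mul_zero]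
  rw [hcross]
  rw [hPd]
  ring
end

section
/- Let N be a natural number, a < b real numbers, and u : ℝ → ℝ a smooth (infinitely differentiable) function. Let p be the degree-(2N+1) two-point Hermite interpolant of u on [a,b]. Then the H^{N+1} seminorm of the interpolant does not exceed that of u: ∫_a^b (p^{(N+1)}(x))² dx ≤ ∫_a^b (u^{(N+1)}(x))² dx. -/
open intervalIntegral

open Polynomial MeasureTheory Set

private lemma poly_contDiff (p : ℝ[X]) : ContDiff ℝ (⊤ : ℕ∞) fun y : ℝ => p.eval y := by
  induction p using Polynomial.induction_on' with
  | add p q hp hq => simpa using hp.add hq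
  | monomial n c =>
      simpa [Polynomial.eval_monomial] using
        (contDiff_const.mul (contDiff_id.pow n) : ContDiff ℝ (⊤ : ℕ∞) fun y : ℝ => c * y ^ n)

private lemma iteratedDeriv_polyeval (k : ℕ) : ∀ p : ℝ[X],
    iteratedDeriv k (fun y : ℝ => p.eval y) = fun y => (derivative^[k] p).eval y := by
  induction k with
  | zero => intro p; simp
  | succ k ih =>
      intro p
      have h1 : deriv (fun y : ℝ => p.eval y) = fun y => p.derivative.eval y := by
        funext y; exact (p.hasDerivAt y).deriv
      rw [iteratedDeriv_succ', h1, ih, Function.iterate_succ_apply]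

private lemma iteratedDeriv_add_top {f g : ℝ → ℝ} (hf : ContDiff ℝ (⊤ : ℕ∞) f) (hg : ContDiff ℝ (⊤ : ℕ∞) g)
    (n : ℕ) :
    iteratedDeriv n (fun x => f x + g x) = fun x => iteratedDeriv n f x + iteratedDeriv n g x := by
  induction n with
  | zero => simp
  | succ n ih =>
      have hdf : Differentiable ℝ (iteratedDeriv n f) :=
        hf.differentiable_iteratedDeriv n (by exact_mod_cast lt_top_iff_ne_top.2 (by simp))
      have hdg : Differentiable ℝ (iteratedDeriv n g) :=
        hg.differentiable_iteratedDeriv n (by exact_mod_cast lt_top_iff_ne_top.2 (by simp))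
      funext x
      rw [iteratedDeriv_succ, ih, iteratedDeriv_succ, iteratedDeriv_succ]
      exact deriv_add (hdf x) (hdg x)


private lemma ibp_key (a b : ℝ) (e : ℝ → ℝ) (he : ContDiff ℝ (⊤ : ℕ∞) e) :
    ∀ k : ℕ, ∀ q : ℝ[X], q.degree < (k : ℕ) →
      (∀ j < k, iteratedDeriv j e a = 0 ∧ iteratedDeriv j e b = 0) →
      ∫ x in a..b, q.eval x * iteratedDeriv k e x = 0 := by
  intro k
  induction k with
  | zero =>
      intro q hq _
      have : q = 0 := Polynomial.degree_eq_bot.1 ((by rw [← Nat.WithBot.lt_zero_iff]; simpa using hq))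
      simp [this]
  | succ k ih =>
      intro q hq hbd
      have hek : Continuous (iteratedDeriv k e) := he.continuous_iteratedDeriv k (by exact_mod_cast le_top)
      have hek1 : Continuous (iteratedDeriv (k + 1) e) := he.continuous_iteratedDeriv (k + 1) (by exact_mod_cast le_top)
      have hdiff : Differentiable ℝ (iteratedDeriv k e) :=
        he.differentiable_iteratedDeriv k (by exact_mod_cast lt_top_iff_ne_top.2 (by simp))
      have hv : ∀ x ∈ uIcc a b, HasDerivAt (iteratedDeriv k e) (iteratedDeriv (k + 1) e x) x := by
        intro x _
        have h1 := (hdiff x).hasDerivAt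
        rw [iteratedDeriv_succ]
        exact h1
      have hu : ∀ x ∈ uIcc a b, HasDerivAt (fun y => q.eval y) (q.derivative.eval x) x :=
        fun x _ => q.hasDerivAt x
      have hibp := integral_mul_deriv_eq_deriv_mul hu hv
        (q.derivative.continuous.intervalIntegrable a b) (hek1.intervalIntegrable a b)
      have hbk := hbd k (Nat.lt_succ_self k)
      have hderivdeg : q.derivative.degree < (k : ℕ) := by
        rcases eq_or_ne q.derivative 0 with h0 | h0
        · rw [h0, Polynomial.degree_zero]
          exact bot_lt_iff_ne_bot.2 (by simp)
        · have hq0 : q ≠ 0 := fun h => h0 (by simp [h])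
          have hnd : q.natDegree ≠ 0 := fun h => h0 (Polynomial.eq_C_of_natDegree_eq_zero h ▸ by simp)
          have h1 : q.derivative.natDegree < q.natDegree := Polynomial.natDegree_derivative_lt hnd
          have h2 : q.natDegree < k + 1 := (Polynomial.natDegree_lt_iff_degree_lt hq0).2 hq
          exact (Polynomial.natDegree_lt_iff_degree_lt h0).1 (by omega)
      have hrec := ih q.derivative hderivdeg (fun j hj => hbd j (Nat.lt_succ_of_lt hj))
      have : (∫ x in a..b, q.eval x * deriv (iteratedDeriv k e) x) =
          ∫ x in a..b, q.eval x * iteratedDeriv (k + 1) e x := by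
        rw [← iteratedDeriv_succ]
      rw [hibp, hbk.1, hbk.2, hrec]
      ring


/-- **Stability of Hermite interpolation in the `H^{N+1}` seminorm.**
Let `a < b`, `u : ℝ → ℝ` be smooth, and `p` be the degree-`2N+1` two-point Hermite
interpolant of `u` on `[a,b]`.  Then the `H^{N+1}` seminorm of the interpolant does
not exceed that of `u`: `∫_a^b (p⁽ᴺ⁺¹⁾)² ≤ ∫_a^b (u⁽ᴺ⁺¹⁾)²`. -/
theorem hermite_interpolation_seminorm_le
    (N : ℕ) (a b : ℝ) (hab : a < b) (u : ℝ → ℝ) (hu : ContDiff ℝ (⊤ : ℕ∞) u)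
    (p : Polynomial ℝ) (hpdeg : p.degree ≤ (2 * N + 1 : ℕ))
    (hinterp : ∀ j ≤ N,
      iteratedDeriv j (fun y => p.eval y) a = iteratedDeriv j u a ∧
      iteratedDeriv j (fun y => p.eval y) b = iteratedDeriv j u b) :
    (∫ x in a..b, (iteratedDeriv (N + 1) (fun y => p.eval y) x) ^ 2) ≤
      ∫ x in a..b, (iteratedDeriv (N + 1) u x) ^ 2 := by
  set pe : ℝ → ℝ := fun y => p.eval y with hpe
  have hpc : ContDiff ℝ (⊤ : ℕ∞) pe := poly_contDiff p
  set e : ℝ → ℝ := fun x => u x - p.eval x with hedef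
  have he : ContDiff ℝ (⊤ : ℕ∞) e := hu.sub hpc
  have hue : u = fun x => e x + pe x := by funext x; simp [hedef, hpe]
  have hsum : ∀ n : ℕ, ∀ x : ℝ,
      iteratedDeriv n u x = iteratedDeriv n e x + iteratedDeriv n pe x := by
    intro n x
    conv_lhs => rw [hue]
    rw [iteratedDeriv_add_top he hpc]
  -- boundary values of e vanish
  have hbd : ∀ j < N + 1, iteratedDeriv j e a = 0 ∧ iteratedDeriv j e b = 0 := by
    intro j hj
    have hj' : j ≤ N := Nat.lt_succ_iff.1 hj
    have h1 := (hinterp j hj').1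
    have h2 := (hinterp j hj').2
    have ha := hsum j a
    have hb := hsum j b
    constructor
    · rw [← h1] at ha; linarith
    · rw [← h2] at hb; linarith
  set q : ℝ[X] := Polynomial.derivative^[N + 1] p with hq
  have hiter : iteratedDeriv (N + 1) pe = fun y => q.eval y := iteratedDeriv_polyeval (N + 1) p
  have hqdeg : q.degree < ((N + 1 : ℕ) : ℕ) := by
    have hnd : p.natDegree ≤ 2 * N + 1 := Polynomial.natDegree_le_iff_degree_le.2 hpdeg
    have hqn : q.natDegree ≤ N := le_trans (Polynomial.natDegree_iterate_derivative p (N + 1)) (by omega)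
    have h1 : q.degree ≤ (N : ℕ) :=
      le_trans Polynomial.degree_le_natDegree (by exact_mod_cast hqn)
    exact lt_of_le_of_lt h1 (by exact_mod_cast Nat.lt_succ_self N)
  have hcross : ∫ x in a..b, q.eval x * iteratedDeriv (N + 1) e x = 0 :=
    ibp_key a b e he (N + 1) q hqdeg hbd
  set E : ℝ → ℝ := iteratedDeriv (N + 1) e with hE
  have hEc : Continuous E := he.continuous_iteratedDeriv (N + 1) (by exact_mod_cast le_top)
  have hQc : Continuous fun x : ℝ => q.eval x := q.continuous
  have hsplit : (∫ x in a..b, (iteratedDeriv (N + 1) u x) ^ 2) =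
      (∫ x in a..b, (q.eval x) ^ 2) + (2 * ∫ x in a..b, q.eval x * E x)
        + ∫ x in a..b, (E x) ^ 2 := by
    have hcongr : (∫ x in a..b, (iteratedDeriv (N + 1) u x) ^ 2) =
        ∫ x in a..b, ((q.eval x) ^ 2 + (2 * (q.eval x * E x) + (E x) ^ 2)) := by
      apply intervalIntegral.integral_congr
      intro x _
      have := hsum (N + 1) x
      rw [hiter] at this
      simp only [this]
      ring
    rw [hcongr, intervalIntegral.integral_add (f := fun x => (q.eval x) ^ 2)
        (g := fun x => 2 * (q.eval x * E x) + (E x) ^ 2) ((hQc.pow 2).intervalIntegrable a b)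
        (((continuous_const.mul (hQc.mul hEc)).add (hEc.pow 2)).intervalIntegrable a b),
      intervalIntegral.integral_add (f := fun x => 2 * (q.eval x * E x)) (g := fun x => (E x) ^ 2)
        ((continuous_const.mul (hQc.mul hEc)).intervalIntegrable a b)
        ((hEc.pow 2).intervalIntegrable a b),
      intervalIntegral.integral_const_mul]
    ring
  have hEnn : 0 ≤ ∫ x in a..b, (E x) ^ 2 :=
    intervalIntegral.integral_nonneg hab.le (fun x _ => sq_nonneg _)
  have hfin : (∫ x in a..b, (iteratedDeriv (N + 1) pe x) ^ 2) = ∫ x in a..b, (q.eval x) ^ 2 := by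
    apply intervalIntegral.integral_congr
    intro x _
    rw [hiter]
  rw [hfin, hsplit, hcross]
  linarith
end

section
/- Let L > 0, let K ≥ 1 be a natural number, set h = L/K and grid points x_m = m·h for m = 0, …, K, let s be a real number, and let u : ℝ → ℝ be smooth and L-periodic (u(x + L) = u(x) for all x). For each m = 0, …, K−1, let p_m be the degree-(2N+1) two-point Hermite interpolant of the shifted function x ↦ u(x + s) on [x_m, x_{m+1}]. Then Σ_{m=0}^{K−1} ∫_{x_m}^{x_{m+1}} (p_m^{(N+1)}(x))² dx ≤ ∫_0^L (u^{(N+1)}(x))² dx. -/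
open intervalIntegral Polynomial

open scoped ContDiff

-- polynomial eval is smooth
lemma contDiff_polyEval (p : Polynomial ℝ) : ContDiff ℝ ∞ (fun x : ℝ => p.eval x) := by
  induction p using Polynomial.induction_on' with
  | add p q hp hq => simpa [Polynomial.eval_add] using hp.add hq
  | monomial n a =>
      simpa [Polynomial.eval_monomial] using (contDiff_const (c := a)).mul (contDiff_id.pow n)

lemma iterPoly (p : Polynomial ℝ) (n : ℕ) :
    iteratedDeriv n (fun x : ℝ => p.eval x) = fun x => (Polynomial.derivative^[n] p).eval x := by
  induction n with
  | zero => simp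
  | succ n IH =>
      rw [iteratedDeriv_succ, IH]
      funext x
      rw [Function.iterate_succ_apply', ← Polynomial.deriv (p := Polynomial.derivative^[n] p)]

lemma contDiff_iter (f : ℝ → ℝ) (hf : ContDiff ℝ ∞ f) (n : ℕ) :
    ContDiff ℝ ∞ (iteratedDeriv n f) := by
  rw [iteratedDeriv_eq_iterate]; exact hf.iterate_deriv n

lemma iterSub (f g : ℝ → ℝ) (hf : ContDiff ℝ ∞ f) (hg : ContDiff ℝ ∞ g) (n : ℕ) :
    iteratedDeriv n (fun y => f y - g y) = fun y => iteratedDeriv n f y - iteratedDeriv n g y := by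
  induction n with
  | zero => simp
  | succ n IH =>
      rw [iteratedDeriv_succ, IH, iteratedDeriv_succ, iteratedDeriv_succ]
      funext x
      exact deriv_fun_sub ((contDiff_iter f hf n).differentiable (by simp) |>.differentiableAt)
        ((contDiff_iter g hg n).differentiable (by simp) |>.differentiableAt)

lemma ortho (a b : ℝ) : ∀ (n : ℕ) (e : ℝ → ℝ), ContDiff ℝ ∞ e → ∀ q : Polynomial ℝ,
    Polynomial.derivative^[n] q = 0 →
    (∀ j < n, iteratedDeriv j e a = 0 ∧ iteratedDeriv j e b = 0) →
    (∫ y in a..b, iteratedDeriv n e y * q.eval y) = 0 := by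
  intro n
  induction n with
  | zero =>
      intro e _ q hq _
      simp at hq
      simp [hq]
  | succ n IH =>
      intro e he q hq hvan
      have hd : ∀ x ∈ Set.uIcc a b, HasDerivAt (iteratedDeriv n e) (iteratedDeriv (n+1) e x) x := by
        intro x _
        rw [iteratedDeriv_succ]
        exact ((contDiff_iter e he n).differentiable
          (by simp)).differentiableAt.hasDerivAt
      have hq' : ∀ x ∈ Set.uIcc a b, HasDerivAt (fun y => q.eval y) (q.derivative.eval x) x :=
        fun x _ => q.hasDerivAt x
      have hcont1 : Continuous (iteratedDeriv (n+1) e) :=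
        (contDiff_iter e he (n+1)).continuous
      have hcont0 : Continuous (iteratedDeriv n e) := (contDiff_iter e he n).continuous
      have hib := intervalIntegral.integral_deriv_mul_eq_sub hd hq'
        (hcont1.intervalIntegrable a b)
        ((contDiff_polyEval q.derivative).continuous.intervalIntegrable a b)
      have hbdy : iteratedDeriv n e b * q.eval b - iteratedDeriv n e a * q.eval a = 0 := by
        rcases hvan n (Nat.lt_succ_self n) with ⟨h1, h2⟩
        rw [h1, h2]; ring
      have hsplit : (∫ y in a..b, iteratedDeriv (n+1) e y * q.eval y + iteratedDeriv n e y * q.derivative.eval y)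
          = (∫ y in a..b, iteratedDeriv (n+1) e y * q.eval y)
            + ∫ y in a..b, iteratedDeriv n e y * q.derivative.eval y :=
        intervalIntegral.integral_add
          ((hcont1.mul (contDiff_polyEval q).continuous).intervalIntegrable a b)
          ((hcont0.mul (contDiff_polyEval q.derivative).continuous).intervalIntegrable a b)
      have hIH := IH e he q.derivative (by rw [← Function.iterate_succ_apply]; exact hq)
        (fun j hj => hvan j (hj.trans (Nat.lt_succ_self n)))
      rw [hsplit, hbdy, hIH] at hib
      linarith

lemma step_le (N : ℕ) (a b : ℝ) (hab : a ≤ b) (v : ℝ → ℝ) (hv : ContDiff ℝ ∞ v)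
    (p : Polynomial ℝ) (hdeg : p.degree ≤ (2 * N + 1 : ℕ))
    (ha : ∀ j ≤ N, iteratedDeriv j (fun y => p.eval y) a = iteratedDeriv j v a)
    (hb : ∀ j ≤ N, iteratedDeriv j (fun y => p.eval y) b = iteratedDeriv j v b) :
    (∫ y in a..b, (iteratedDeriv (N + 1) (fun z => p.eval z) y) ^ 2)
      ≤ ∫ y in a..b, (iteratedDeriv (N + 1) v y) ^ 2 := by
  set e : ℝ → ℝ := fun y => v y - p.eval y with he_def
  have he : ContDiff ℝ ∞ e := hv.sub (contDiff_polyEval p)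
  set q : Polynomial ℝ := Polynomial.derivative^[N + 1] p with hq_def
  have hq0 : Polynomial.derivative^[N + 1] q = 0 := by
    rw [hq_def, ← Function.iterate_add_apply]
    apply Polynomial.iterate_derivative_eq_zero
    have : p.natDegree ≤ 2 * N + 1 := Polynomial.natDegree_le_iff_degree_le.mpr hdeg
    omega
  have hvan : ∀ j < N + 1, iteratedDeriv j e a = 0 ∧ iteratedDeriv j e b = 0 := by
    intro j hj
    have hs := iterSub v (fun y => p.eval y) hv (contDiff_polyEval p) j
    constructor
    · rw [show iteratedDeriv j e a = iteratedDeriv j v a - iteratedDeriv j (fun y => p.eval y) a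
        from congrFun hs a, ha j (Nat.lt_succ_iff.mp hj)]; ring
    · rw [show iteratedDeriv j e b = iteratedDeriv j v b - iteratedDeriv j (fun y => p.eval y) b
        from congrFun hs b, hb j (Nat.lt_succ_iff.mp hj)]; ring
  have hcross := ortho a b (N + 1) e he q hq0 hvan
  have hEq : (fun y => (iteratedDeriv (N + 1) v y) ^ 2) =
      fun y => ((iteratedDeriv (N + 1) e y) ^ 2
        + 2 * (iteratedDeriv (N + 1) e y * q.eval y)) + (q.eval y) ^ 2 := by
    funext y
    have h1 := congrFun (iterSub v (fun y => p.eval y) hv (contDiff_polyEval p) (N + 1)) y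
    have h2 := congrFun (iterPoly p (N + 1)) y
    have h3 : iteratedDeriv (N + 1) e y = iteratedDeriv (N + 1) v y - q.eval y := by
      rw [he_def, hq_def, h1, h2]
    rw [h3]; ring
  have hce : Continuous (iteratedDeriv (N + 1) e) := (contDiff_iter e he (N + 1)).continuous
  have hcq : Continuous (fun y : ℝ => q.eval y) := (contDiff_polyEval q).continuous
  have hi1 : IntervalIntegrable (fun y => (iteratedDeriv (N + 1) e y) ^ 2
      + 2 * (iteratedDeriv (N + 1) e y * q.eval y)) MeasureTheory.volume a b :=
    ((hce.pow 2).add (continuous_const.mul (hce.mul hcq))).intervalIntegrable a b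
  have hi2 : IntervalIntegrable (fun y => (q.eval y) ^ 2) MeasureTheory.volume a b :=
    (hcq.pow 2).intervalIntegrable a b
  have hsplit : (∫ y in a..b, (iteratedDeriv (N + 1) v y) ^ 2)
      = (∫ y in a..b, ((iteratedDeriv (N + 1) e y) ^ 2
          + 2 * (iteratedDeriv (N + 1) e y * q.eval y)))
        + ∫ y in a..b, (q.eval y) ^ 2 := by
    rw [hEq]; exact intervalIntegral.integral_add hi1 hi2
  have hsplit2 : (∫ y in a..b, ((iteratedDeriv (N + 1) e y) ^ 2
        + 2 * (iteratedDeriv (N + 1) e y * q.eval y)))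
      = (∫ y in a..b, (iteratedDeriv (N + 1) e y) ^ 2)
        + 2 * ∫ y in a..b, iteratedDeriv (N + 1) e y * q.eval y := by
    rw [intervalIntegral.integral_add (f := fun y => (iteratedDeriv (N + 1) e y) ^ 2)
      (g := fun y => 2 * (iteratedDeriv (N + 1) e y * q.eval y)) ((hce.pow 2).intervalIntegrable a b)
      ((continuous_const.mul (hce.mul hcq)).intervalIntegrable a b),
      intervalIntegral.integral_const_mul]
  have hnn : 0 ≤ ∫ y in a..b, (iteratedDeriv (N + 1) e y) ^ 2 :=
    intervalIntegral.integral_nonneg hab (fun x _ => sq_nonneg _)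
  have hgoal : (∫ y in a..b, (iteratedDeriv (N + 1) (fun z => p.eval z) y) ^ 2)
      = ∫ y in a..b, (q.eval y) ^ 2 := by
    rw [iterPoly p (N + 1)]
  rw [hgoal]
  rw [hsplit, hsplit2, hcross]
  linarith

/-- **One Hermite step does not increase the `H^{N+1}` seminorm of a periodic solution.**
Let `L > 0`, `K ≥ 1`, `h = L/K`, grid points `x_m = m·h`, `s ∈ ℝ`, and let `u` be a
smooth `L`-periodic function.  For each `m < K` let `p m` be the degree-`2N+1`
two-point Hermite interpolant of the shifted function `x ↦ u (x + s)` on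
`[x_m, x_{m+1}]`.  Then
`Σ_{m<K} ∫_{x_m}^{x_{m+1}} ((p m)⁽ᴺ⁺¹⁾)² ≤ ∫_0^L (u⁽ᴺ⁺¹⁾)²`. -/
theorem hermite_step_seminorm_le_of_periodic
    (N K : ℕ) (hK : 1 ≤ K) (L : ℝ) (hL : 0 < L) (s : ℝ)
    (u : ℝ → ℝ) (hu : ContDiff ℝ (⊤ : ℕ∞) u) (hper : ∀ y : ℝ, u (y + L) = u y)
    (p : ℕ → Polynomial ℝ)
    (hpdeg : ∀ m < K, (p m).degree ≤ (2 * N + 1 : ℕ))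
    (hinterp : ∀ m < K, ∀ j ≤ N,
      iteratedDeriv j (fun y => (p m).eval y) ((m : ℝ) * (L / K)) =
        iteratedDeriv j (fun y => u (y + s)) ((m : ℝ) * (L / K)) ∧
      iteratedDeriv j (fun y => (p m).eval y) (((m : ℝ) + 1) * (L / K)) =
        iteratedDeriv j (fun y => u (y + s)) (((m : ℝ) + 1) * (L / K))) :
    (∑ m ∈ Finset.range K,
        ∫ y in ((m : ℝ) * (L / K))..(((m : ℝ) + 1) * (L / K)),
          (iteratedDeriv (N + 1) (fun z => (p m).eval z) y) ^ 2) ≤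
      ∫ y in (0 : ℝ)..L, (iteratedDeriv (N + 1) u y) ^ 2 := by
  
  have hu' : ContDiff ℝ ∞ u := hu.of_le (by simp)
  have hK0 : (0 : ℝ) < (K : ℝ) := by exact_mod_cast hK
  have hh : 0 < L / K := div_pos hL hK0
  have hvC : ContDiff ℝ ∞ (fun y : ℝ => u (y + s)) :=
    hu'.comp (contDiff_id.add contDiff_const)
  -- termwise bound
  have hterm : ∀ m ∈ Finset.range K,
      (∫ y in ((m : ℝ) * (L / K))..(((m : ℝ) + 1) * (L / K)),
          (iteratedDeriv (N + 1) (fun z => (p m).eval z) y) ^ 2)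
        ≤ ∫ y in ((m : ℝ) * (L / K))..(((m : ℝ) + 1) * (L / K)),
          (iteratedDeriv (N + 1) (fun y : ℝ => u (y + s)) y) ^ 2 := by
    intro m hm
    have hmK := Finset.mem_range.mp hm
    refine step_le N _ _ ?_ _ hvC (p m) (hpdeg m hmK)
      (fun j hj => (hinterp m hmK j hj).1) (fun j hj => (hinterp m hmK j hj).2)
    have : (m : ℝ) ≤ (m : ℝ) + 1 := by linarith
    exact mul_le_mul_of_nonneg_right this hh.le
  refine le_trans (Finset.sum_le_sum hterm) ?_
  -- sum the integrals of the shifted function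
  set f : ℝ → ℝ := fun y => (iteratedDeriv (N + 1) (fun z : ℝ => u (z + s)) y) ^ 2 with hf_def
  have hfc : Continuous f := ((contDiff_iter _ hvC (N + 1)).continuous).pow 2
  have hsum : (∑ m ∈ Finset.range K,
      ∫ y in ((m : ℝ) * (L / K))..(((m : ℝ) + 1) * (L / K)), f y)
      = ∫ y in ((0 : ℕ) : ℝ) * (L / K)..((K : ℕ) : ℝ) * (L / K), f y := by
    rw [show (∑ m ∈ Finset.range K,
        ∫ y in ((m : ℝ) * (L / K))..(((m : ℝ) + 1) * (L / K)), f y)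
      = ∑ m ∈ Finset.range K,
        ∫ y in (((m : ℕ) : ℝ) * (L / K))..((((m + 1 : ℕ)) : ℝ) * (L / K)), f y from
      Finset.sum_congr rfl (fun m _ => by push_cast; ring_nf)]
    exact intervalIntegral.sum_integral_adjacent_intervals
      (fun k _ => hfc.intervalIntegrable _ _)
  rw [hsum]
  have hKL : ((K : ℕ) : ℝ) * (L / K) = L := by field_simp
  rw [show (((0 : ℕ) : ℝ) * (L / K)) = (0 : ℝ) by simp, hKL]
  -- shift and periodicity
  have hshift : iteratedDeriv (N + 1) (fun z : ℝ => u (z + s))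
      = fun t => iteratedDeriv (N + 1) u (t + s) := iteratedDeriv_comp_add_const _ u s
  set g : ℝ → ℝ := fun t => (iteratedDeriv (N + 1) u t) ^ 2 with hg_def
  have hfg : f = fun y => g (y + s) := by
    funext y; rw [hf_def, hshift]
  have hgper : Function.Periodic g L := by
    intro x
    have h1 := congrFun (iteratedDeriv_comp_add_const (N + 1) u L) x
    have h2 : (fun z : ℝ => u (z + L)) = u := funext hper
    rw [h2] at h1
    simp only [hg_def]
    rw [← h1]
  rw [hfg, intervalIntegral.integral_comp_add_right g s]
  have := hgper.intervalIntegral_add_eq s 0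
  rw [zero_add] at this
  rw [show (0 : ℝ) + s = s by ring, show L + s = s + L by ring, this]
end

section
/- Let V be a real vector space, A : V → V a linear map, dt a real number, u ∈ V, and n a natural number. Define the sequence w_0, w_1, …, w_{n+1} in V by w_0 = u and w_{m+1} = u + (dt/(n+1−m)) · A(w_m) for m = 0, …, n. Then w_{n+1} = Σ_{k=0}^{n+1} (dt^k / k!) · A^k(u), i.e., the Horner-style recursion of the Hermite time-stepping algorithm computes exactly the degree-(n+1) truncated exponential series applied to u. -/
/-- **The Horner-style recursion of Hermite time stepping computes the truncated
exponential.**  Let `V` be a real vector space, `A : V →ₗ[ℝ] V`, `dt : ℝ`, `u ∈ V`,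
`n : ℕ`.  If `w 0 = u` and `w (m+1) = u + (dt/(n+1-m)) • A (w m)` for `m = 0, …, n`,
then `w (n+1) = Σ_{k=0}^{n+1} (dt^k / k!) • A^k u`. -/
theorem hermite_horner_recursion_eq_truncated_exponential
    (V : Type*) [AddCommGroup V] [Module ℝ V]
    (A : V →ₗ[ℝ] V) (dt : ℝ) (u : V) (n : ℕ) (w : ℕ → V)
    (hw0 : w 0 = u)
    (hwrec : ∀ m ≤ n, w (m + 1) = u + (dt / ((n : ℝ) + 1 - (m : ℝ))) • A (w m)) :
    w (n + 1) = ∑ k ∈ Finset.range (n + 2), (dt ^ k / (k.factorial : ℝ)) • (A ^ k) u := by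
  have key : ∀ m, m ≤ n + 1 → w m = ∑ k ∈ Finset.range (m + 1),
      ((dt ^ k * ((n + 1 - m).factorial : ℝ) / (((n + 1 - m + k).factorial : ℝ)))) • (A ^ k) u := by
    intro m
    induction m with
    | zero =>
      intro _
      rw [hw0]
      rw [show (0:ℕ)+1 = 1 from rfl, Finset.sum_range_one]
      simp only [pow_zero, one_mul, Nat.add_zero]
      rw [div_self ((Nat.cast_ne_zero (R := ℝ)).mpr (Nat.factorial_pos _).ne'), one_smul]
      rfl
    | succ m ih =>
      intro hm
      have hmn : m ≤ n := Nat.lt_succ_iff.mp hm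
      rw [hwrec m hmn, ih (le_of_lt hm)]
      obtain ⟨j, hj⟩ : ∃ j, n - m = j := ⟨n - m, rfl⟩
      have hsub : n + 1 - (m + 1) = j := by omega
      have hsub2 : n + 1 - m = j + 1 := by omega
      have hcast : (n : ℝ) + 1 - (m : ℝ) = ((j + 1 : ℕ) : ℝ) := by
        have : (n : ℝ) = (m : ℝ) + (j : ℝ) := by exact_mod_cast congrArg Nat.cast (by omega : n = m + j)
        rw [this]; push_cast; ring
      rw [hsub, hsub2, hcast, map_sum, Finset.smul_sum]
      rw [Finset.sum_range_succ' (fun k => (dt ^ k * ((j).factorial : ℝ) /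
          ((j + k).factorial : ℝ)) • (A ^ k) u)]
      have h0 : (dt ^ 0 * ((j).factorial : ℝ) / ((j + 0).factorial : ℝ)) • (A ^ 0) u = u := by
        simp only [pow_zero, one_mul, Nat.add_zero]
        rw [div_self (by exact_mod_cast (Nat.factorial_pos _).ne'), one_smul]
        rfl
      rw [h0, add_comm]
      congr 1
      apply Finset.sum_congr rfl
      intro k _
      rw [map_smul, smul_smul]
      have hA : A ((A ^ k) u) = (A ^ (k + 1)) u := by
        rw [pow_succ']
        rfl
      rw [hA]
      congr 1
      have hf1 : ((j + 1).factorial : ℝ) = ((j : ℝ) + 1) * ((j).factorial : ℝ) := by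
        rw [Nat.factorial_succ]; push_cast; ring
      have hf3 : ((j + 1 + k).factorial : ℝ) = ((j : ℝ) + (k : ℝ) + 1) * ((j + k).factorial : ℝ) := by
        have : j + 1 + k = (j + k) + 1 := by omega
        rw [this, Nat.factorial_succ]; push_cast; ring
      rw [show j + (k + 1) = j + 1 + k from by omega, hf1, hf3]
      have hne1 : ((j : ℝ) + 1) ≠ 0 := by positivity
      have hne2 : ((j : ℝ) + (k : ℝ) + 1) ≠ 0 := by positivity
      have hne3 : ((j + k).factorial : ℝ) ≠ 0 := by
        exact_mod_cast (Nat.factorial_pos _).ne'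
      push_cast
      field_simp
      ring
  have hfin := key (n + 1) le_rfl
  rw [hfin]
  apply Finset.sum_congr rfl
  intro k _
  simp
end
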